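/- arXiv:2309.17165 — 4 statements merged into one kernel-verified Lean document; each statement's English description precedes it below -/
import Mathlib

section
/- Let a ∈ ℝ, b > 0 and c > b be real numbers, and let D = {z ∈ ℍ : a ≤ Re z ≤ a + b and |z − a| ≥ c} be the domain enclosed by the geodesics γ_{a,∞}, γ_{a+b,∞} and γ_{a−c,a+c}, with right corner X₀ = (a + b) + i·√(c² − b²) ∈ ℍ. Let d, d' be real numbers with a ≤ d ≤ a + b ≤ d' and d < d', and assume the geodesic γ_{d,d'} intersects D. Then for every z ∈ D one has cosh(infDist(X₀, γ_{d,d'})) · cosh(infDist(z, γ_{a,∞})) ≤ cosh(infDist(z, γ_{d,d'})) · cosh(infDist(X₀, γ_{a,∞})); that is, the function X ↦ cosh(infDist(X, γ_{d,d'}))/cosh(infDist(X, γ_{a,∞})) on D is minimal at X₀. -/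
open Real UpperHalfPlane

/-- The vertical hyperbolic geodesic `γ_{t,∞} = {w ∈ ℍ : Re w = t}`. -/
def vertGeodesic (t : ℝ) : Set UpperHalfPlane := {w | w.re = t}

/-- The semicircular hyperbolic geodesic `γ_{u,v}` with endpoints `u < v`. -/
noncomputable def arcGeodesic (u v : ℝ) : Set UpperHalfPlane :=
  {w | ‖(w : ℂ) - (((u + v) / 2 : ℝ) : ℂ)‖ = (v - u) / 2}

/-- The domain `D = {z ∈ ℍ : a ≤ Re z ≤ a + b, |z − a| ≥ c}`. -/
noncomputable def domainD (a b c : ℝ) : Set UpperHalfPlane :=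
  {z | a ≤ z.re ∧ z.re ≤ a + b ∧ c ≤ ‖(z : ℂ) - (a : ℂ)‖}

/-- The right corner `X₀ = (a + b) + i√(c² − b²)` of the domain `D`. -/
noncomputable def cornerPoint (a b c : ℝ) (hb : 0 < b) (hbc : b < c) : UpperHalfPlane :=
  ⟨(↑(a + b) : ℂ) + (Real.sqrt (c ^ 2 - b ^ 2) : ℝ) * Complex.I, by
    have h : (0 : ℝ) < Real.sqrt (c ^ 2 - b ^ 2) := Real.sqrt_pos.mpr (by nlinarith)
    simpa using h⟩

lemma cornerPoint_re (a b c : ℝ) (hb : 0 < b) (hbc : b < c) :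
    (cornerPoint a b c hb hbc).re = a + b := by
  show ((↑(a + b) : ℂ) + (Real.sqrt (c ^ 2 - b ^ 2) : ℝ) * Complex.I).re = a + b
  simp

lemma cornerPoint_im (a b c : ℝ) (hb : 0 < b) (hbc : b < c) :
    (cornerPoint a b c hb hbc).im = Real.sqrt (c ^ 2 - b ^ 2) := by
  show ((↑(a + b) : ℂ) + (Real.sqrt (c ^ 2 - b ^ 2) : ℝ) * Complex.I).im = _
  simp


lemma infDist_attained {z w₀ : UpperHalfPlane} {S : Set UpperHalfPlane} (hw : w₀ ∈ S)
    (hmin : ∀ w ∈ S, dist z w₀ ≤ dist z w) : Metric.infDist z S = dist z w₀ := by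
  refine le_antisymm (Metric.infDist_le_dist_of_mem hw) ?_
  rw [Metric.infDist_eq_iInf]
  haveI : Nonempty S := ⟨⟨w₀, hw⟩⟩
  exact le_ciInf fun w => hmin w w.2

lemma cosh_dist_formula (z w : UpperHalfPlane) :
    Real.cosh (dist z w) =
      1 + ((z.re - w.re)^2 + (z.im - w.im)^2) / (2 * z.im * w.im) := by
  rw [UpperHalfPlane.cosh_dist]
  congr 2
  rw [Complex.dist_eq, Complex.sq_norm, Complex.normSq_apply]
  simp [Complex.sub_re, Complex.sub_im, UpperHalfPlane.coe_re, UpperHalfPlane.coe_im]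
  ring

lemma dist_le_of_cosh_le {x y : ℝ} (hx : 0 ≤ x) (hy : 0 ≤ y)
    (h : Real.cosh x ≤ Real.cosh y) : x ≤ y := by
  have := Real.cosh_le_cosh.mp h
  rwa [abs_of_nonneg hx, abs_of_nonneg hy] at this

lemma mem_arc_iff {u v : ℝ} (huv : u < v) (w : UpperHalfPlane) :
    w ∈ arcGeodesic u v ↔ (w.re - (u+v)/2)^2 + w.im^2 = ((v-u)/2)^2 := by
  have hr : (0:ℝ) < (v-u)/2 := by linarith
  constructor
  · intro hw
    have := congrArg (· ^ 2) hw
    rw [Complex.sq_norm, Complex.normSq_apply] at this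
    simpa [Complex.sub_re, Complex.sub_im, UpperHalfPlane.coe_re, UpperHalfPlane.coe_im,
      sq] using this
  · intro hw
    show ‖_‖ = _
    rw [Complex.norm_def, Complex.normSq_apply]
    have h1 : ((w:ℂ) - (((u + v) / 2 : ℝ) : ℂ)).re = w.re - (u+v)/2 := by
      simp [Complex.sub_re, UpperHalfPlane.coe_re]
    have h2 : ((w:ℂ) - (((u + v) / 2 : ℝ) : ℂ)).im = w.im := by
      simp [Complex.sub_im, UpperHalfPlane.coe_im]
    rw [h1, h2]
    rw [show (w.re - (u+v)/2) * (w.re - (u+v)/2) + w.im * w.im = ((v-u)/2)^2 by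
      nlinarith [hw]]
    exact Real.sqrt_sq hr.le

lemma aux1 (p y r S : ℝ) (hS2 : S^2 = (p^2+y^2-r^2)^2+4*r^2*y^2)
    (hr : 0 < r) (hy : 0 < y) (hS : 0 < S) :
    1 + ((p - 2*r^2*p/(p^2+y^2+r^2))^2 + (y - r*S/(p^2+y^2+r^2))^2)
      / (2*y*(r*S/(p^2+y^2+r^2))) = S/(2*r*y) := by
  have hA : (0:ℝ) < p^2+y^2+r^2 := by positivity
  field_simp
  linear_combination (r^2 - (p^2+y^2+r^2)) * hS2

lemma aux2 (p y r S α β : ℝ) (hS2 : S^2 = (p^2+y^2-r^2)^2+4*r^2*y^2)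
    (hw : α^2 + β^2 = r^2) (hr : 0 < r) (hy : 0 < y) (hβ : 0 < β) (hS : 0 ≤ S) :
    S/(2*r*y) ≤ 1 + ((p - α)^2 + (y - β)^2)/(2*y*β) := by
  have hKA : S^2 + 4*r^2*p^2 = (p^2+y^2+r^2)^2 := by linear_combination hS2
  have h1 : (S*β + 2*r*p*α)^2 = r^2*(p^2+y^2+r^2)^2 - (α*S - 2*r*p*β)^2 := by
    linear_combination (α^2+β^2)*hKA + (p^2+y^2+r^2)^2*hw
  have hrA : (0:ℝ) ≤ r*(p^2+y^2+r^2) := by positivity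
  have h2 : S*β + 2*r*p*α ≤ r*(p^2+y^2+r^2) := by
    nlinarith [h1, sq_nonneg (α*S - 2*r*p*β), hrA,
      sq_nonneg (S*β + 2*r*p*α - r*(p^2+y^2+r^2)), sq_nonneg (S*β + 2*r*p*α + r*(p^2+y^2+r^2))]
  have h3 : r*(α^2+β^2) = r*r^2 := by rw [hw]
  have hmain : S * β ≤ r * (2*y*β + ((p - α)^2 + (y - β)^2)) := by nlinarith [h2, h3]
  calc S/(2*r*y) = (S*β)/(2*r*y*β) := by field_simp
    _ ≤ (r * (2*y*β + ((p - α)^2 + (y - β)^2)))/(2*r*y*β) := by gcongr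
    _ = 1 + ((p - α)^2 + (y - β)^2)/(2*y*β) := by field_simp

lemma aux3 (p y r S : ℝ) (hS2 : S^2 = (p^2+y^2-r^2)^2+4*r^2*y^2)
    (hr : 0 < r) (hy : 0 < y) :
    (2*r^2*p/(p^2+y^2+r^2))^2 + (r*S/(p^2+y^2+r^2))^2 = r^2 := by
  have hA : (0:ℝ) < p^2+y^2+r^2 := by positivity
  field_simp
  linear_combination hS2

lemma cosh_infDist_arc (z : UpperHalfPlane) {u v : ℝ} (huv : u < v) :
    Real.cosh (Metric.infDist z (arcGeodesic u v)) =
      Real.sqrt (((z.re - (u+v)/2)^2 + z.im^2 - ((v-u)/2)^2)^2 + 4*((v-u)/2)^2*z.im^2)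
        / (2*((v-u)/2)*z.im) := by
  have hy := z.im_pos
  obtain ⟨m, hm⟩ : ∃ m, (u+v)/2 = m := ⟨_, rfl⟩
  obtain ⟨r, hrd⟩ : ∃ r, (v-u)/2 = r := ⟨_, rfl⟩
  have hr : 0 < r := by rw [← hrd]; linarith
  rw [hm, hrd]
  obtain ⟨S, hSd⟩ : ∃ S, Real.sqrt (((z.re - m)^2 + z.im^2 - r^2)^2 + 4*r^2*z.im^2) = S :=
    ⟨_, rfl⟩
  rw [hSd]
  have hS2 : S^2 = ((z.re - m)^2 + z.im^2 - r^2)^2 + 4*r^2*z.im^2 := by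
    rw [← hSd]; exact Real.sq_sqrt (by positivity)
  have hS0 : 0 ≤ S := by rw [← hSd]; exact Real.sqrt_nonneg _
  have hS : 0 < S := by
    nlinarith [hS2, sq_nonneg ((z.re - m)^2 + z.im^2 - r^2),
      mul_pos (mul_pos hr hr) (mul_pos hy hy)]
  have hA : (0:ℝ) < (z.re - m)^2+z.im^2+r^2 := by positivity
  have him : 0 < r*S/((z.re - m)^2+z.im^2+r^2) := by positivity
  set w₁ : UpperHalfPlane := UpperHalfPlane.mk
    ⟨m + 2*r^2*(z.re - m)/((z.re - m)^2+z.im^2+r^2), r*S/((z.re - m)^2+z.im^2+r^2)⟩ him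
    with hw₁
  have hw₁re : w₁.re = m + 2*r^2*(z.re - m)/((z.re - m)^2+z.im^2+r^2) := rfl
  have hw₁im : w₁.im = r*S/((z.re - m)^2+z.im^2+r^2) := rfl
  have hw₁mem : w₁ ∈ arcGeodesic u v := by
    rw [mem_arc_iff huv, hm, hrd, hw₁re, hw₁im]
    rw [show m + 2*r^2*(z.re - m)/((z.re - m)^2+z.im^2+r^2) - m
        = 2*r^2*(z.re - m)/((z.re - m)^2+z.im^2+r^2) by ring]
    exact aux3 (z.re - m) z.im r S hS2 hr hy
  have hcosh₁ : Real.cosh (dist z w₁) = S/(2*r*z.im) := by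
    rw [cosh_dist_formula, hw₁re, hw₁im]
    rw [show z.re - (m + 2*r^2*(z.re - m)/((z.re - m)^2+z.im^2+r^2))
        = (z.re - m) - 2*r^2*(z.re - m)/((z.re - m)^2+z.im^2+r^2) by ring]
    exact aux1 (z.re - m) z.im r S hS2 hr hy hS
  have key : ∀ w ∈ arcGeodesic u v, dist z w₁ ≤ dist z w := by
    intro w hw
    rw [mem_arc_iff huv, hm, hrd] at hw
    apply dist_le_of_cosh_le dist_nonneg dist_nonneg
    rw [hcosh₁, cosh_dist_formula]
    rw [show z.re - w.re = (z.re - m) - (w.re - m) by ring]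
    exact aux2 (z.re - m) z.im r S (w.re - m) w.im hS2 hw hr hy w.im_pos hS0
  rw [infDist_attained hw₁mem key, hcosh₁]

lemma cosh_infDist_vert (z : UpperHalfPlane) (t : ℝ) :
    Real.cosh (Metric.infDist z (vertGeodesic t)) =
      Real.sqrt ((z.re - t)^2 + z.im^2) / z.im := by
  have hy := z.im_pos
  set R := Real.sqrt ((z.re - t)^2 + z.im^2) with hRdef
  have hR2 : R^2 = (z.re - t)^2 + z.im^2 := Real.sq_sqrt (by positivity)
  have hR0 : 0 ≤ R := Real.sqrt_nonneg _
  have hRpos : 0 < R := by nlinarith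
  set w₀ : UpperHalfPlane := UpperHalfPlane.mk ⟨t, R⟩ hRpos with hw₀def
  have hw₀re : w₀.re = t := rfl
  have hw₀im : w₀.im = R := rfl
  have hw₀S : w₀ ∈ vertGeodesic t := hw₀re
  have hcosh₀ : Real.cosh (dist z w₀) = R / z.im := by
    rw [cosh_dist_formula, hw₀re, hw₀im]
    have h1 : (z.re - t)^2 + (z.im - R)^2 = 2*R^2 - 2*z.im*R := by nlinarith
    rw [h1]
    field_simp
    ring
  have key : ∀ w ∈ vertGeodesic t, dist z w₀ ≤ dist z w := by
    intro w hw
    have hwim := w.im_pos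
    apply dist_le_of_cosh_le dist_nonneg dist_nonneg
    rw [hcosh₀, cosh_dist_formula, show w.re = t from hw]
    have hmain : R * (2 * w.im) ≤ 2*z.im*w.im + ((z.re - t)^2 + (z.im - w.im)^2) := by
      nlinarith [sq_nonneg (R - w.im)]
    calc R / z.im = (R * (2*w.im)) / (2*z.im*w.im) := by
          field_simp
      _ ≤ (2*z.im*w.im + ((z.re - t)^2 + (z.im - w.im)^2)) / (2*z.im*w.im) := by
          gcongr
      _ = 1 + ((z.re - t)^2 + (z.im - w.im)^2) / (2*z.im*w.im) := by
          field_simp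
  rw [infDist_attained hw₀S key, hcosh₀]

lemma stepAcore (xb b c MM s Q : ℝ) (hb : 0 < b) (hbc : b < c) (hQc : c^2 ≤ Q)
    (hxb : xb ≤ b) (hs : 0 ≤ s) (hT : c^2 + s ≤ 2*MM*b) :
    0 ≤ MM*(Q+s) - s*(xb+b) := by
  have P2 := mul_le_mul_of_nonneg_right hT (show (0:ℝ) ≤ Q + s by nlinarith)
  have P1 : 0 ≤ b*(s*(b - xb)) := mul_nonneg hb.le (mul_nonneg hs (by linarith))
  have P3 := mul_le_mul_of_nonneg_left hQc (sq_nonneg c)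
  have P4 := sq_nonneg (c^2 - s)
  have P5 : 0 ≤ s*(c^2 - b^2) := mul_nonneg hs (by nlinarith)
  have P6 : 0 ≤ s*(Q - b^2) := mul_nonneg hs (by nlinarith)
  nlinarith [P1, P2, P3, P4, P5, P6, hb, mul_pos hb hb]

lemma stepA (xb y MM r b s Q : ℝ) (hs_def : s = MM^2 - r^2) (hQdef : Q = xb^2 + y^2)
    (h1 : 0 ≤ b - xb) (h2 : 0 ≤ MM*(Q+s) - s*(xb+b)) :
    (Q + s - 2*MM*b)^2 + 4*r^2*(Q - b^2) ≤ (Q + s - 2*MM*xb)^2 + 4*r^2*y^2 := by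
  nlinarith [mul_nonneg h1 h2, hQdef, hs_def]

lemma stepB1 (b c D D' : ℝ) (hb : 0 < b) (hbc : b < c) (h1 : 0 ≤ D) (h2 : D ≤ b)
    (h3 : b ≤ D') :
    (b*(D+D') - D*D')^2 ≤ (D'-D)^2*b^2 + c^4 := by
  have hP0 : 0 ≤ D*(2*b-D) := mul_nonneg h1 (by linarith)
  have hPb : D*(2*b-D) ≤ b^2 := by nlinarith [sq_nonneg (b-D)]
  have hP'b : D'*(2*b-D') ≤ b^2 := by nlinarith [sq_nonneg (b-D')]
  have h4 : 0 ≤ b^2*b^2 - (D*(2*b-D))*(D'*(2*b-D')) := by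
    nlinarith [mul_nonneg hP0 (sub_nonneg.2 hP'b),
      mul_nonneg (sq_nonneg b) (sub_nonneg.2 hPb)]
  have h5 : b^2 ≤ c^2 := by nlinarith
  have h6 : b^2*b^2 ≤ c^2*c^2 := by nlinarith [h5, sq_nonneg b, sq_nonneg c, hb, hbc]
  nlinarith [h4, h6]

lemma stepB (b c MM r s Q : ℝ) (hQc : c^2 ≤ Q) (hc : 0 < c)
    (hB1 : (2*MM*b - s)^2 ≤ 4*r^2*b^2 + c^4) :
    Q * ((c^2 + s - 2*MM*b)^2 + 4*r^2*(c^2 - b^2))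
      ≤ c^2 * ((Q + s - 2*MM*b)^2 + 4*r^2*(Q - b^2)) := by
  have g2 : 0 ≤ c^2*(Q - c^2) - 2*c^2*(2*MM*b - s - c^2) - (2*MM*b - s - c^2)^2
      + 4*r^2*b^2 := by
    nlinarith [hB1, mul_le_mul_of_nonneg_left hQc (sq_nonneg c), hQc]
  nlinarith [mul_nonneg (sub_nonneg.2 hQc) g2]

set_option maxHeartbeats 1000000 in
theorem stmt0 (a b c : ℝ) (hb : 0 < b) (hbc : b < c) (d d' : ℝ)
    (hda : a ≤ d) (hdb : d ≤ a + b) (hd' : a + b ≤ d') (hdd' : d < d')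
    (hmeet : (arcGeodesic d d' ∩ domainD a b c).Nonempty) :
    ∀ z ∈ domainD a b c,
      Real.cosh (Metric.infDist (cornerPoint a b c hb hbc) (arcGeodesic d d')) *
          Real.cosh (Metric.infDist z (vertGeodesic a)) ≤
        Real.cosh (Metric.infDist z (arcGeodesic d d')) *
          Real.cosh (Metric.infDist (cornerPoint a b c hb hbc) (vertGeodesic a)) := by
  intro z hz
  obtain ⟨hz1, hz2, hz3⟩ := hz
  set X₀ := cornerPoint a b c hb hbc with hX₀
  have hc0 : (0:ℝ) < c := lt_trans hb hbc
  rw [cosh_infDist_vert z a, cosh_infDist_vert X₀ a, cosh_infDist_arc z hdd',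
    cosh_infDist_arc X₀ hdd', cornerPoint_re, cornerPoint_im]
  obtain ⟨H, hHd⟩ : ∃ H, Real.sqrt (c ^ 2 - b ^ 2) = H := ⟨_, rfl⟩
  rw [hHd]
  have hH2 : H^2 = c^2 - b^2 := by rw [← hHd]; exact Real.sq_sqrt (by nlinarith)
  have hH : 0 < H := by rw [← hHd]; exact Real.sqrt_pos.mpr (by nlinarith)
  obtain ⟨m, hm⟩ : ∃ m, (d+d')/2 = m := ⟨_, rfl⟩
  obtain ⟨r, hrd⟩ : ∃ r, (d'-d)/2 = r := ⟨_, rfl⟩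
  rw [hm, hrd]
  have hr : 0 < r := by rw [← hrd]; linarith
  have hmr : m - r = d := by rw [← hm, ← hrd]; ring
  have hmr' : m + r = d' := by rw [← hm, ← hrd]; ring
  have hy := z.im_pos
  have hC4 : Real.sqrt ((a + b - a)^2 + H^2) = c := by
    rw [show (a + b - a)^2 + H^2 = c^2 by linear_combination hH2]
    exact Real.sqrt_sq hc0.le
  rw [hC4]
  have hzc : c^2 ≤ (z.re - a)^2 + z.im^2 := by
    have h1 : c^2 ≤ ‖(z:ℂ) - (a:ℂ)‖^2 := pow_le_pow_left₀ hc0.le hz3 2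
    rw [Complex.sq_norm, Complex.normSq_apply] at h1
    simp only [Complex.sub_re, Complex.sub_im, Complex.ofReal_re, Complex.ofReal_im,
      UpperHalfPlane.coe_re, UpperHalfPlane.coe_im] at h1
    nlinarith [h1]
  obtain ⟨w, hwarc, hw1, hw2, hw3⟩ := hmeet
  rw [mem_arc_iff hdd', hm, hrd] at hwarc
  have hwc : c^2 ≤ (w.re - a)^2 + w.im^2 := by
    have h1 : c^2 ≤ ‖(w:ℂ) - (a:ℂ)‖^2 := pow_le_pow_left₀ hc0.le hw3 2
    rw [Complex.sq_norm, Complex.normSq_apply] at h1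
    simp only [Complex.sub_re, Complex.sub_im, Complex.ofReal_re, Complex.ofReal_im,
      UpperHalfPlane.coe_re, UpperHalfPlane.coe_im] at h1
    nlinarith [h1]
  have hma : 0 < m - a := by linarith [hmr, hmr']
  have hT : c^2 + ((m-a)^2 - r^2) ≤ 2*(m-a)*b := by
    nlinarith [hwarc, hwc, mul_le_mul_of_nonneg_left (show w.re ≤ a + b from hw2) hma.le]
  have hsd : (0:ℝ) ≤ d - a := by linarith
  have hsd' : (0:ℝ) ≤ d' - a := by linarith
  have hs : 0 ≤ (m-a)^2 - r^2 := by
    have e : (m-a)^2 - r^2 = (d-a)*(d'-a) := by rw [← hmr, ← hmr']; ring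
    rw [e]; exact mul_nonneg hsd hsd'
  have hstep2 := stepAcore (z.re - a) b c (m-a) ((m-a)^2 - r^2)
    ((z.re - a)^2 + z.im^2) hb hbc hzc (by linarith) hs hT
  have hA' := stepA (z.re - a) z.im (m-a) r b ((m-a)^2 - r^2)
    ((z.re - a)^2 + z.im^2) (by ring) (by ring) (by linarith) hstep2
  have f1 : 0 ≤ m - r - a := by linarith [hmr]
  have f1b : m - r - a ≤ b := by linarith [hmr]
  have f2 : b ≤ m + r - a := by linarith [hmr']
  have hB1' := stepB1 b c (m-r-a) (m+r-a) hb hbc f1 f1b f2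
  have hB1 : (2*(m-a)*b - ((m-a)^2 - r^2))^2 ≤ 4*r^2*b^2 + c^4 := by nlinarith [hB1']
  have hB' := stepB b c (m-a) r ((m-a)^2 - r^2) ((z.re - a)^2 + z.im^2) hzc hc0 hB1
  have hK0 : ((a + b - m)^2 + H^2 - r^2)^2 + 4*r^2*H^2
      = (c^2 + ((m-a)^2 - r^2) - 2*(m-a)*b)^2 + 4*r^2*(c^2 - b^2) := by
    linear_combination (2*(a + b - m)^2 - 2*r^2 + H^2 + (c^2 - b^2) + 4*r^2) * hH2
  have hcore : (((a + b - m)^2 + H^2 - r^2)^2 + 4*r^2*H^2) * ((z.re - a)^2 + z.im^2)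
      ≤ (((z.re - m)^2 + z.im^2 - r^2)^2 + 4*r^2*z.im^2) * c^2 := by
    rw [hK0]
    have e : (((z.re - a)^2 + z.im^2) + ((m-a)^2 - r^2) - 2*(m-a)*(z.re - a))^2
        + 4*r^2*z.im^2 = ((z.re - m)^2 + z.im^2 - r^2)^2 + 4*r^2*z.im^2 := by ring
    rw [← e]
    have h2 := mul_le_mul_of_nonneg_left hA' (sq_nonneg c)
    linarith [hB', h2]
  have hsq : Real.sqrt (((a + b - m)^2 + H^2 - r^2)^2 + 4*r^2*H^2)
        * Real.sqrt ((z.re - a)^2 + z.im^2)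
      ≤ Real.sqrt (((z.re - m)^2 + z.im^2 - r^2)^2 + 4*r^2*z.im^2) * c := by
    have h1 := Real.sqrt_le_sqrt hcore
    rwa [Real.sqrt_mul (by positivity), Real.sqrt_mul (by positivity),
      Real.sqrt_sq hc0.le] at h1
  rw [div_mul_div_comm, div_mul_div_comm]
  rw [show 2*r*H*z.im = 2*r*z.im*H by ring]
  exact (div_le_div_iff_of_pos_right (by positivity)).mpr hsq
end

section
/- For every point z in the hyperbolic upper half-plane ℍ and every real number t, the hyperbolic distance from z to the vertical geodesic {w ∈ ℍ : Re w = t} satisfies sinh(infDist(z, {w ∈ ℍ : Re w = t})) = |Re z − t| / Im z. -/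
open Real UpperHalfPlane

theorem stmt14 (z : UpperHalfPlane) (t : ℝ) :
    Real.sinh (Metric.infDist z {w : UpperHalfPlane | w.re = t}) = |z.re - t| / z.im := by
  set x := z.re
  set y := z.im with hy
  have hy0 : 0 < y := z.im_pos
  set s : ℝ := Real.sqrt ((x - t) ^ 2 + y ^ 2) with hs
  have hs0 : 0 < s := Real.sqrt_pos.2 (by positivity)
  have hssq : s ^ 2 = (x - t) ^ 2 + y ^ 2 := Real.sq_sqrt (by positivity)
  set d₀ : ℝ := Real.arsinh (|x - t| / y) with hd₀
  have hd₀0 : 0 ≤ d₀ := Real.arsinh_nonneg_iff.2 (by positivity)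
  have hcoshd₀ : Real.cosh d₀ = s / y := by
    rw [hd₀, Real.cosh_arsinh,
      show (1 : ℝ) + (|x - t| / y) ^ 2 = ((x - t) ^ 2 + y ^ 2) / y ^ 2 by
        rw [div_pow, sq_abs]; field_simp; ring,
      Real.sqrt_div (by positivity), Real.sqrt_sq hy0.le]
  set w₀ : UpperHalfPlane := ⟨⟨t, s⟩, hs0⟩ with hw₀
  have hw₀mem : w₀ ∈ {w : UpperHalfPlane | w.re = t} := rfl
  have hcosh_dist : ∀ w : UpperHalfPlane, Real.cosh (dist z w)
      = ((x - w.re) ^ 2 + y ^ 2 + w.im ^ 2) / (2 * y * w.im) :=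
    fun w => UpperHalfPlane.cosh_dist' z w
  have hdist_w₀ : dist z w₀ = d₀ := by
    have h1 : Real.cosh (dist z w₀) = Real.cosh d₀ := by
      rw [hcosh_dist, hcoshd₀]
      have hre : w₀.re = t := rfl
      have him : w₀.im = s := rfl
      rw [hre, him]
      field_simp
      nlinarith [hssq]
    have h2 : |dist z w₀| = |d₀| := le_antisymm
      (Real.cosh_le_cosh.1 h1.le) (Real.cosh_le_cosh.1 h1.ge)
    rwa [abs_of_nonneg dist_nonneg, abs_of_nonneg hd₀0] at h2
  have hinf : Metric.infDist z {w : UpperHalfPlane | w.re = t} = d₀ := by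
    apply le_antisymm
    · rw [← hdist_w₀]; exact Metric.infDist_le_dist_of_mem hw₀mem
    · rw [Metric.infDist_eq_iInf]
      have : Nonempty {w : UpperHalfPlane // w ∈ {w : UpperHalfPlane | w.re = t}} := ⟨⟨w₀, hw₀mem⟩⟩
      apply le_ciInf
      rintro ⟨w, hw⟩
      simp only
      have hc : Real.cosh d₀ ≤ Real.cosh (dist z w) := by
        rw [hcosh_dist, hcoshd₀, hw]
        rw [div_le_div_iff₀ hy0 (by positivity)]
        nlinarith [sq_nonneg (s - w.im), hssq, w.im_pos, hy0]
      have h3 := Real.cosh_le_cosh.1 hc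
      calc d₀ ≤ |d₀| := le_abs_self d₀
        _ ≤ |dist z w| := h3
        _ = dist z w := abs_of_nonneg dist_nonneg
  rw [hinf, hd₀, Real.sinh_arsinh]
end

section
/- For every real number p, every r > 0, and every point z in the hyperbolic upper half-plane ℍ, the hyperbolic distance from z to the semicircular geodesic {w ∈ ℍ : |w − p| = r} satisfies sinh(infDist(z, {w ∈ ℍ : |w − p| = r})) = | |z − p|² − r² | / (2·r·Im z). -/
open Real UpperHalfPlane

lemma div_div_aux (a b c : ℝ) (hc : c ≠ 0) (hb : b ≠ 0) : a / c / (b / c) = a / b := by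
  field_simp

lemma circ_eq (p r : ℝ) (w : UpperHalfPlane)
    (hw : ‖(w : ℂ) - (p : ℂ)‖ = r) :
    (w.re - p)^2 + w.im^2 = r^2 := by
  have h2 : Complex.normSq ((w : ℂ) - p) = r ^ 2 := by rw [← Complex.sq_norm, hw]
  rw [Complex.normSq_apply] at h2
  simp only [Complex.sub_re, Complex.sub_im, Complex.ofReal_re, Complex.ofReal_im,
    UpperHalfPlane.coe_re, UpperHalfPlane.coe_im, sub_zero] at h2
  nlinarith [h2]

lemma cosh_dist_circ (p r : ℝ) (z w : UpperHalfPlane)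
    (hw : ‖(w : ℂ) - (p : ℂ)‖ = r) :
    Real.cosh (dist z w) =
      ((z.re - p)^2 + z.im^2 + r^2 - 2*(z.re - p)*(w.re - p)) / (2 * z.im * w.im) := by
  have hy := z.im_pos
  have hv := w.im_pos
  have hcirc := circ_eq p r w hw
  rw [UpperHalfPlane.cosh_dist]
  have hd : dist (z : ℂ) (w : ℂ) ^ 2 = (z.re - w.re)^2 + (z.im - w.im)^2 := by
    rw [Complex.dist_eq, Complex.sq_norm, Complex.normSq_apply]
    simp only [Complex.sub_re, Complex.sub_im, UpperHalfPlane.coe_re, UpperHalfPlane.coe_im]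
    ring
  rw [hd]
  field_simp
  nlinarith [hcirc]

set_option maxHeartbeats 1000000 in
theorem stmt15 (p r : ℝ) (hr : 0 < r) (z : UpperHalfPlane) :
    Real.sinh (Metric.infDist z
        {w : UpperHalfPlane | ‖(w : ℂ) - (p : ℂ)‖ = r}) =
      |‖(z : ℂ) - (p : ℂ)‖ ^ 2 - r ^ 2| / (2 * r * z.im) := by
  set S := {w : UpperHalfPlane | ‖(w : ℂ) - (p : ℂ)‖ = r} with hS
  set x := z.re - p with hx
  set y := z.im with hy'
  have hy : 0 < y := z.im_pos
  set A := x^2 + y^2 + r^2 with hA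
  have hA0 : 0 < A := by positivity
  set s := A^2 - 4*r^2*x^2 with hsdef
  have hs : 0 < s := by nlinarith [sq_nonneg (x^2+y^2-r^2), sq_nonneg y, mul_pos hr hy]
  have hsqs : Real.sqrt s ^ 2 = s := Real.sq_sqrt hs.le
  have hsqpos : 0 < Real.sqrt s := Real.sqrt_pos.mpr hs
  set t := |x^2 + y^2 - r^2| / (2*r*y) with ht
  have ht0 : 0 ≤ t := by positivity
  -- the closest point
  set v₀ : ℝ := r * Real.sqrt s / A with hv₀def
  have hv₀ : 0 < v₀ := by positivity
  set w₀ : UpperHalfPlane := UpperHalfPlane.mk ⟨p + 2*r^2*x/A, v₀⟩ hv₀ with hw₀def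
  have hw₀re : w₀.re = p + 2*r^2*x/A := rfl
  have hw₀im : w₀.im = v₀ := rfl
  have hw₀mem : w₀ ∈ S := by
    show ‖(w₀ : ℂ) - (p : ℂ)‖ = r
    rw [Complex.norm_def, Complex.normSq_apply]
    have hre : ((w₀ : ℂ) - (p : ℂ)).re = 2*r^2*x/A := by
      simp [Complex.sub_re, hw₀def, UpperHalfPlane.coe_re]
    have him : ((w₀ : ℂ) - (p : ℂ)).im = v₀ := by
      simp [Complex.sub_im, hw₀def, UpperHalfPlane.coe_im]
    rw [hre, him]
    have : 2*r^2*x/A * (2*r^2*x/A) + v₀ * v₀ = r^2 := by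
      have : v₀ * v₀ = r^2 * s / A^2 := by
        rw [hv₀def]; rw [div_mul_div_comm]
        rw [show r * Real.sqrt s * (r * Real.sqrt s) = r^2 * (Real.sqrt s ^2) by ring, hsqs]
        ring
      rw [this, hsdef]
      field_simp
      ring
    rw [this, Real.sqrt_sq hr.le]
  -- cosh at w₀
  have hco : Real.cosh (dist z w₀) = Real.sqrt s / (2*r*y) := by
    rw [cosh_dist_circ p r z w₀ hw₀mem, hw₀re, hw₀im]
    have h1 : (z.re - p)^2 + z.im^2 + r^2 - 2*(z.re - p)*(p + 2*r^2*x/A - p) = s / A := by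
      rw [← hx, ← hy', hsdef]
      field_simp
      ring
    rw [h1, hv₀def, ← hy']
    rw [show 2 * y * (r * Real.sqrt s / A) = 2*r*y*Real.sqrt s/A by ring]
    rw [div_div_aux s (2*r*y*Real.sqrt s) A hA0.ne'
      (mul_pos (by positivity : (0:ℝ) < 2*r*y) hsqpos).ne']
    rw [show 2*r*y*Real.sqrt s = Real.sqrt s*(2*r*y) by ring]
    rw [← div_div, Real.div_sqrt]
  -- sinh at w₀ equals t
  have hsinh₀ : Real.sinh (dist z w₀) = t := by
    have hc2 : Real.cosh (dist z w₀) ^ 2 = Real.sinh (dist z w₀) ^ 2 + 1 := Real.cosh_sq _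
    have h1 : Real.sinh (dist z w₀) ^ 2 = t ^ 2 := by
      have hcosq : Real.cosh (dist z w₀) ^ 2 = s / (2*r*y)^2 := by
        rw [hco, div_pow, hsqs]
      have htsq : t^2 = (x^2+y^2-r^2)^2 / (2*r*y)^2 := by
        rw [ht, div_pow, sq_abs]
      rw [htsq]
      have : Real.sinh (dist z w₀) ^ 2 = s / (2*r*y)^2 - 1 := by
        rw [← hcosq]; linarith
      rw [this, hsdef, hA]
      field_simp
      ring
    have := Real.sqrt_sq (Real.sinh_nonneg_iff.mpr (dist_nonneg : (0:ℝ) ≤ dist z w₀))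
    rw [← this, h1, Real.sqrt_sq ht0]
  -- lower bound
  have hlb : ∀ w ∈ S, dist z w₀ ≤ dist z w := by
    intro w hwS
    have hw : ‖(w : ℂ) - (p : ℂ)‖ = r := hwS
    have hv := w.im_pos
    set u := w.re - p with hu
    set v := w.im with hv'
    have hcirc : u^2 + v^2 = r^2 := circ_eq p r w hw
    have hAu : 0 < A - 2*x*u := by nlinarith [sq_nonneg (x-u), hy]
    have key : Real.sqrt s * v ≤ r * (A - 2*x*u) := by
      have h2 : Real.sqrt s ≤ r * (A - 2*x*u) / v := by
        rw [show r * (A - 2*x*u) / v = Real.sqrt ((r * (A - 2*x*u) / v)^2) from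
          (Real.sqrt_sq (by positivity)).symm]
        apply Real.sqrt_le_sqrt
        rw [div_pow, le_div_iff₀ (by positivity)]
        nlinarith [sq_nonneg (u*A - 2*r^2*x), hcirc]
      calc Real.sqrt s * v ≤ (r * (A - 2*x*u) / v) * v := by
            exact mul_le_mul_of_nonneg_right h2 hv.le
        _ = r * (A - 2*x*u) := by field_simp
    have hcoshle : Real.cosh (dist z w₀) ≤ Real.cosh (dist z w) := by
      rw [hco, cosh_dist_circ p r z w hw, ← hx, ← hy', ← hu, ← hv']
      rw [show x^2+y^2+r^2 - 2*(x)*(u) = A - 2*x*u from by rw [hA]]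
      rw [div_le_div_iff₀ (by positivity) (by positivity)]
      have key2 := mul_le_mul_of_nonneg_left key (by positivity : (0:ℝ) ≤ 2*y)
      nlinarith [key2]
    have hsinhle : Real.sinh (dist z w₀) ≤ Real.sinh (dist z w) := by
      have h1 := Real.cosh_sq (dist z w₀)
      have h2 := Real.cosh_sq (dist z w)
      have s1 : (0:ℝ) ≤ Real.sinh (dist z w₀) := Real.sinh_nonneg_iff.mpr (dist_nonneg : (0:ℝ) ≤ dist z w₀)
      have s2 : (0:ℝ) ≤ Real.sinh (dist z w) := Real.sinh_nonneg_iff.mpr (dist_nonneg : (0:ℝ) ≤ dist z w)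
      have c1 : (0:ℝ) ≤ Real.cosh (dist z w₀) := (Real.cosh_pos _).le
      nlinarith [hcoshle, mul_nonneg s1 s2, Real.cosh_pos (dist z w), Real.cosh_pos (dist z w₀)]
    exact Real.sinh_le_sinh.mp hsinhle
  -- conclude
  have hne : S.Nonempty := ⟨w₀, hw₀mem⟩
  have heq : Metric.infDist z S = dist z w₀ := by
    refine le_antisymm (Metric.infDist_le_dist_of_mem hw₀mem) ?_
    by_contra h
    push_neg at h
    obtain ⟨w, hwS, hlt⟩ := (Metric.infDist_lt_iff hne).mp h
    exact absurd (hlb w hwS) (not_le.mpr hlt)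
  rw [heq, hsinh₀]
  have habs : ‖(z : ℂ) - (p : ℂ)‖ ^ 2 = x^2 + y^2 := by
    rw [Complex.sq_norm, Complex.normSq_apply]
    simp only [Complex.sub_re, Complex.sub_im, Complex.ofReal_re, Complex.ofReal_im,
      UpperHalfPlane.coe_re, UpperHalfPlane.coe_im, sub_zero, ← hx, ← hy']
    ring
  rw [habs, ht]
end

section
/- Let d, a, b, d' be real numbers with d ≤ a < b ≤ d' and d < d'. Then for every point z ∈ ℍ lying in the closed half-disk bounded by the geodesic γ_{a,b}, i.e. satisfying |z − (a+b)/2| ≤ (b−a)/2, one has infDist(z, γ_{a,b}) ≤ infDist(z, γ_{d,d'}); equivalently, the angle θ(z, d, d') between the directions d and d' at z is at most the angle θ(z, a, b). -/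
open Real UpperHalfPlane

lemma comb_pos {t zy py : ℝ} (ht0 : 0 ≤ t) (ht1 : t ≤ 1) (hz : 0 < zy) (hp : 0 < py) :
    0 < (1 - t) * zy + t * py := by
  rcases ht1.lt_or_eq with h | h
  · nlinarith [mul_nonneg ht0 hp.le, mul_pos (sub_pos.2 h) hz]
  · subst h; simpa using hp

/-- a point on the Euclidean segment from `z` to `p` is no farther from `z` than `p` is. -/
lemma seg_dist_le (z p : UpperHalfPlane) (t : ℝ) (ht0 : 0 ≤ t) (ht1 : t ≤ 1)
    (w : UpperHalfPlane) (hw : (w : ℂ) = (z : ℂ) + t * ((p : ℂ) - z)) :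
    dist z w ≤ dist z p := by
  have hzy : 0 < z.im := z.im_pos
  have hpy : 0 < p.im := p.im_pos
  have hwy : w.im = (1 - t) * z.im + t * p.im := by
    have h1 : w.im = ((z : ℂ) + t * ((p : ℂ) - z)).im := by
      rw [← UpperHalfPlane.coe_im, hw]
    rw [h1, Complex.add_im, Complex.mul_im, Complex.sub_im]
    simp [UpperHalfPlane.coe_im]
    ring
  have hdzw : dist (z : ℂ) (w : ℂ) = t * dist (z : ℂ) (p : ℂ) := by
    rw [Complex.dist_eq, Complex.dist_eq, hw]
    have : (z : ℂ) - ((z : ℂ) + t * ((p : ℂ) - z)) = (t : ℂ) * ((z : ℂ) - p) := by ring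
    rw [this, norm_mul]
    simp [abs_of_nonneg ht0]
  have hwy' : 0 < (1 - t) * z.im + t * p.im := comb_pos ht0 ht1 hzy hpy
  have key : dist (z:ℂ) (w:ℂ) ^ 2 / (2 * z.im * w.im) ≤
      dist (z:ℂ) (p:ℂ) ^ 2 / (2 * z.im * p.im) := by
    rw [hdzw, hwy]
    rw [div_le_div_iff₀ (by positivity) (by positivity)]
    have hd2 : 0 ≤ dist (z:ℂ) (p:ℂ) ^ 2 := sq_nonneg _
    nlinarith [mul_nonneg hd2 (mul_nonneg (sub_nonneg.2 ht1) hzy.le),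
      mul_nonneg (mul_nonneg hd2 ht0) (mul_nonneg (sub_nonneg.2 ht1) hpy.le),
      mul_nonneg (mul_nonneg hd2 ht0) (mul_nonneg (sub_nonneg.2 ht1) hzy.le)]
  have hc : Real.cosh (dist z w) ≤ Real.cosh (dist z p) := by
    rw [UpperHalfPlane.cosh_dist, UpperHalfPlane.cosh_dist]
    linarith
  have := (Real.cosh_le_cosh).1 hc
  rwa [abs_of_nonneg dist_nonneg, abs_of_nonneg dist_nonneg] at this

theorem stmt16 (d a b d' : ℝ) (hda : d ≤ a) (hab : a < b) (hbd' : b ≤ d') (hdd' : d < d')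
    (z : UpperHalfPlane)
    (hz : ‖(z : ℂ) - (((a + b) / 2 : ℝ) : ℂ)‖ ≤ (b - a) / 2) :
    Metric.infDist z (arcGeodesic a b) ≤ Metric.infDist z (arcGeodesic d d') := by
  set cin : ℂ := (((a + b) / 2 : ℝ) : ℂ) with hcin
  set cout : ℂ := (((d + d') / 2 : ℝ) : ℂ) with hcout
  have hrin : (0:ℝ) < (b - a) / 2 := by linarith
  have hrout : (0:ℝ) < (d' - d) / 2 := by linarith
  -- nonemptiness of outer geodesic
  have hw0 : ((((d + d') / 2 : ℝ) : ℂ) + (((d' - d) / 2 : ℝ) : ℂ) * Complex.I).im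
      = (d' - d) / 2 := by simp
  have hne : (arcGeodesic d d').Nonempty := by
    refine ⟨⟨(((d + d') / 2 : ℝ) : ℂ) + (((d' - d) / 2 : ℝ) : ℂ) * Complex.I,
      by rw [hw0]; exact hrout⟩, ?_⟩
    show ‖(((d + d') / 2 : ℝ) : ℂ) + (((d' - d) / 2 : ℝ) : ℂ) * Complex.I
        - (((d + d') / 2 : ℝ) : ℂ)‖ = (d' - d) / 2
    have : (((d + d') / 2 : ℝ) : ℂ) + (((d' - d) / 2 : ℝ) : ℂ) * Complex.I
        - (((d + d') / 2 : ℝ) : ℂ) = ((d' - d) / 2 : ℝ) * Complex.I := by ring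
    rw [this, norm_mul, Complex.norm_I, Complex.norm_real, Real.norm_eq_abs, abs_of_nonneg hrout.le, mul_one]
  by_contra h
  push_neg at h
  obtain ⟨p, hp, hdp⟩ := (Metric.infDist_lt_iff hne).1 h
  -- p is outside or on the inner circle
  have hpout : (b - a) / 2 ≤ ‖(p : ℂ) - cin‖ := by
    have hp' : ‖(p : ℂ) - cout‖ = (d' - d) / 2 := hp
    have h1 : ‖(p : ℂ) - cout‖ ≤
        ‖(p : ℂ) - cin‖ + ‖cin - cout‖ := by
      have := norm_add_le ((p : ℂ) - cin) (cin - cout)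
      simpa using this
    have h2 : ‖cin - cout‖ ≤ (d' - d) / 2 - (b - a) / 2 := by
      rw [hcin, hcout, ← Complex.ofReal_sub, Complex.norm_real, Real.norm_eq_abs]
      rw [abs_le]; constructor <;> [linarith; linarith]
    linarith
  -- IVT along the Euclidean segment from z to p
  set f : ℝ → ℝ := fun t => ‖(z : ℂ) + t * ((p : ℂ) - z) - cin‖ with hf
  have hcont : ContinuousOn f (Set.Icc 0 1) := by
    apply Continuous.continuousOn
    exact continuous_norm.comp (by continuity)
  have hf0 : f 0 ≤ (b - a) / 2 := by simpa [hf] using hz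
  have hf1 : (b - a) / 2 ≤ f 1 := by simpa [hf] using hpout
  obtain ⟨t, ht, hft⟩ := intermediate_value_Icc (by norm_num : (0:ℝ) ≤ 1) hcont ⟨hf0, hf1⟩
  -- the crossing point is in ℍ
  have hzy := z.im_pos
  have hpy := p.im_pos
  have hwim : ((z : ℂ) + t * ((p : ℂ) - z)).im = (1 - t) * z.im + t * p.im := by
    rw [Complex.add_im, Complex.mul_im, Complex.sub_im]
    simp [UpperHalfPlane.coe_im]
    ring
  have hwimpos : 0 < ((z : ℂ) + t * ((p : ℂ) - z)).im := by
    rw [hwim]; exact comb_pos ht.1 ht.2 hzy hpy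
  set w : UpperHalfPlane := ⟨(z : ℂ) + t * ((p : ℂ) - z), hwimpos⟩ with hwdef
  have hwmem : w ∈ arcGeodesic a b := hft
  have hle : dist z w ≤ dist z p := seg_dist_le z p t ht.1 ht.2 w rfl
  have : Metric.infDist z (arcGeodesic a b) ≤ dist z w := Metric.infDist_le_dist_of_mem hwmem
  linarith
end
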